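/- Let F̄ be the survival function of the St. Petersburg lottery, defined by F̄(x) = 1 for x < 2 and F̄(x) = 2^{−⌊log₂ x⌋} for x ≥ 2, and let θ ∈ (0,1). Then the inequality θ·F̄(x) ≤ F̄(x/θ) holds for all x ≥ 0 if and only if θ belongs to the set B = { 2^{−k} : k ∈ ℕ, k ≥ 1 }. -/
import Mathlib


/-- Survival function of the St. Petersburg lottery:
`F̄(x) = 1` for `x < 2` and `F̄(x) = 2^{-⌊log₂ x⌋}` for `x ≥ 2`. -/
noncomputable def stPetersburgSurvival (x : ℝ) : ℝ :=
  if x < 2 then 1 else (2 : ℝ) ^ (-⌊Real.logb 2 x⌋)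

/-- the St. Petersburg lottery is θ-subscalable if and only if
`θ ∈ {2^{-k} : k ∈ ℕ, k ≥ 1}`. -/
theorem stPetersburg_subscalable_iff (θ : ℝ) (hθ : θ ∈ Set.Ioo (0 : ℝ) 1) :
    (∀ x : ℝ, 0 ≤ x →
        θ * stPetersburgSurvival x ≤ stPetersburgSurvival (x / θ)) ↔
      ∃ k : ℕ, 1 ≤ k ∧ θ = (2 : ℝ) ^ (-(k : ℤ)) := by
  obtain ⟨hθ0, hθ1⟩ := hθ
  constructor
  · intro h
    set α : ℝ := -Real.logb 2 θ with hαdef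
    have hαpos : 0 < α := by
      have := Real.logb_neg (b := 2) one_lt_two hθ0 hθ1
      simp only [hαdef]; linarith
    set k : ℕ := ⌈α⌉₊ with hkdef
    have hk1 : 1 ≤ k := Nat.one_le_ceil_iff.mpr hαpos
    refine ⟨k, hk1, ?_⟩
    have hθeq : θ = (2:ℝ) ^ (-α) := by
      rw [hαdef, neg_neg, Real.rpow_logb two_pos (by norm_num) hθ0]
    have hcast : ((2:ℝ) ^ (-(k:ℤ)) : ℝ) = (2:ℝ) ^ (-(k:ℝ)) := by
      rw [← Real.rpow_intCast]; push_cast; ring_nf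
    -- lower bound : 2^{-k} ≤ θ
    have hge : (2:ℝ) ^ (-(k:ℤ)) ≤ θ := by
      rw [hcast, hθeq]
      exact Real.rpow_le_rpow_of_exponent_le one_le_two (by have := Nat.le_ceil α; linarith)
    -- the test point
    set x : ℝ := 2 ^ (k+1) * θ with hxdef
    have h2k : (0:ℝ) < 2 ^ (k+1) := by positivity
    have hxpos : 0 < x := by positivity
    have hx2 : (2:ℝ) ≤ x := by
      have h1 : (1:ℝ) ≤ 2 ^ k * θ := by
        have : (2:ℝ) ^ (-(k:ℤ)) * 2 ^ k ≤ θ * 2 ^ k :=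
          mul_le_mul_of_nonneg_right hge (by positivity)
        have h2 : (2:ℝ) ^ (-(k:ℤ)) * 2 ^ k = 1 := by
          rw [← zpow_natCast (2:ℝ) k, ← zpow_add₀ (by norm_num : (2:ℝ) ≠ 0)]
          simp
        nlinarith
      calc (2:ℝ) = 2 * 1 := by ring
        _ ≤ 2 * (2 ^ k * θ) := by nlinarith
        _ = x := by rw [hxdef]; ring
    have hx4 : x < 4 := by
      have hklt : (k:ℝ) < α + 1 := Nat.ceil_lt_add_one hαpos.le
      have hθlt : θ < (2:ℝ) ^ ((1:ℝ) - k) := by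
        rw [hθeq]
        exact Real.rpow_lt_rpow_of_exponent_lt one_lt_two (by linarith)
      have hpow : (2:ℝ) ^ (k+1) * (2:ℝ) ^ ((1:ℝ) - k) = 4 := by
        rw [← Real.rpow_natCast 2 (k+1), ← Real.rpow_add two_pos]
        push_cast
        rw [show ((k:ℝ) + 1 + (1 - k)) = 2 by ring]
        norm_num
      calc x < 2 ^ (k+1) * (2:ℝ) ^ ((1:ℝ) - k) := by
              exact mul_lt_mul_of_pos_left hθlt h2k
        _ = 4 := hpow
    -- evaluate the survival function at x
    have hlogx1 : (1:ℝ) ≤ Real.logb 2 x := by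
      rw [Real.le_logb_iff_rpow_le one_lt_two hxpos]
      simpa using hx2
    have hlogx2 : Real.logb 2 x < 2 := by
      rw [Real.logb_lt_iff_lt_rpow one_lt_two hxpos]
      norm_num
      linarith
    have hfloorx : ⌊Real.logb 2 x⌋ = 1 := by
      rw [Int.floor_eq_iff]
      constructor <;> push_cast <;> [exact hlogx1; linarith]
    have hFx : stPetersburgSurvival x = 2⁻¹ := by
      rw [stPetersburgSurvival, if_neg (by linarith), hfloorx]
      norm_num
    -- evaluate at x/θ = 2^(k+1)
    have hxθ : x / θ = 2 ^ (k+1) := by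
      rw [hxdef, mul_div_assoc, div_self (ne_of_gt hθ0), mul_one]
    have hlogxθ : Real.logb 2 (x / θ) = ((k:ℝ) + 1) := by
      rw [hxθ, ← Real.rpow_natCast, Real.logb_rpow two_pos (by norm_num)]
      push_cast; ring
    have hfloorxθ : ⌊Real.logb 2 (x / θ)⌋ = (k:ℤ) + 1 := by
      rw [hlogxθ]
      rw [show ((k:ℝ) + 1) = (((k:ℤ) + 1 : ℤ) : ℝ) by push_cast; ring]
      exact Int.floor_intCast _
    have hFxθ : stPetersburgSurvival (x / θ) = (2:ℝ) ^ (-((k:ℤ)+1)) := by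
      rw [stPetersburgSurvival, if_neg, hfloorxθ]
      rw [hxθ]
      push_neg
      calc (2:ℝ) = 2 ^ 1 := by norm_num
        _ ≤ 2 ^ (k+1) := by
          apply pow_le_pow_right₀ one_le_two
          omega
    have key := h x hxpos.le
    rw [hFx, hFxθ] at key
    have hsplit : (2:ℝ) ^ (-((k:ℤ)+1)) = (2:ℝ) ^ (-(k:ℤ)) * 2⁻¹ := by
      rw [show -((k:ℤ)+1) = -(k:ℤ) + (-1) by ring, zpow_add₀ (by norm_num : (2:ℝ) ≠ 0)]
      norm_num
    rw [hsplit] at key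
    have hle : θ ≤ (2:ℝ) ^ (-(k:ℤ)) := by
      have := mul_le_mul_of_nonneg_right key (by norm_num : (0:ℝ) ≤ 2)
      calc θ = θ * 2⁻¹ * 2 := by ring
        _ ≤ (2:ℝ) ^ (-(k:ℤ)) * 2⁻¹ * 2 := this
        _ = (2:ℝ) ^ (-(k:ℤ)) := by ring
    exact le_antisymm hle hge
  · rintro ⟨k, hk1, rfl⟩
    set θ : ℝ := (2:ℝ) ^ (-(k:ℤ)) with hθdef
    intro x hx
    rw [stPetersburgSurvival, stPetersburgSurvival]
    by_cases hxθ : x / θ < 2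
    · rw [if_pos hxθ]
      split_ifs with hx2
      · nlinarith
      · have hfl : 0 ≤ ⌊Real.logb 2 x⌋ := by
          push_neg at hx2
          have : (1:ℝ) ≤ Real.logb 2 x := by
            rw [Real.le_logb_iff_rpow_le one_lt_two (by linarith)]
            simpa using hx2
          have := Int.le_floor.mpr (by exact_mod_cast this : ((1:ℤ):ℝ) ≤ Real.logb 2 x)
          omega
        have h1 : (2:ℝ) ^ (-⌊Real.logb 2 x⌋) ≤ 1 :=
          zpow_le_one_of_nonpos₀ one_le_two (by omega)
        nlinarith
    · rw [if_neg hxθ]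
      push_neg at hxθ
      have hxpos : 0 < x := by
        have : 0 < x / θ := lt_of_lt_of_le two_pos hxθ
        exact (div_pos_iff.mp this).resolve_right (fun ⟨_, h⟩ => absurd hθ0 (not_lt.mpr h.le)) |>.1
      have hlogθ : Real.logb 2 θ = -(k:ℝ) := by
        rw [hθdef, ← Real.rpow_intCast, Real.logb_rpow two_pos (by norm_num)]
        push_cast; ring
      have hlogdiv : Real.logb 2 (x / θ) = Real.logb 2 x + (k:ℝ) := by
        rw [Real.logb_div (ne_of_gt hxpos) (ne_of_gt hθ0), hlogθ]
        ring
      have hfloordiv : ⌊Real.logb 2 (x / θ)⌋ = ⌊Real.logb 2 x⌋ + (k:ℤ) := by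
        rw [hlogdiv, show ((k:ℝ)) = (((k:ℤ):ℝ)) by push_cast; ring, Int.floor_add_intCast]
      rw [hfloordiv]
      have hsplit : (2:ℝ) ^ (-(⌊Real.logb 2 x⌋ + (k:ℤ))) =
          θ * (2:ℝ) ^ (-⌊Real.logb 2 x⌋) := by
        rw [hθdef, show -(⌊Real.logb 2 x⌋ + (k:ℤ)) = -(k:ℤ) + (-⌊Real.logb 2 x⌋) by ring,
          zpow_add₀ (by norm_num : (2:ℝ) ≠ 0)]
      rw [hsplit]
      split_ifs with hx2
      · -- x < 2 : need θ * 1 ≤ θ * 2^{-⌊logb 2 x⌋}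
        have hfl : ⌊Real.logb 2 x⌋ ≤ 0 := by
          have : Real.logb 2 x < 1 := by
            rw [Real.logb_lt_iff_lt_rpow one_lt_two hxpos]
            simpa using hx2
          have := Int.floor_lt.mpr (by exact_mod_cast this : Real.logb 2 x < ((1:ℤ):ℝ))
          omega
        have h1 : (1:ℝ) ≤ (2:ℝ) ^ (-⌊Real.logb 2 x⌋) :=
          one_le_zpow₀ one_le_two (by omega)
        nlinarith
      · exact le_refl _
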